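/- arXiv:1210.1293 — 2 statements merged into one kernel-verified Lean document; each statement's English description precedes it below -/
import Mathlib

section
/- Let m, n ≥ 3 be integers, let K = ℚ(cos(π/m), cos(π/n)) and k = ℚ(cos(2π/m), cos(2π/n), cos(π/m)·cos(π/n)) as subfields of ℝ, and let G_{m,n} be the subgroup of SL(2,ℝ) generated by A = [[1, 2cos(π/m) + 2cos(π/n)], [0, 1]] and B = [[2cos(π/m), 1], [−1, 0]]. If K ≠ k, then no nonzero element of k is a parabolic fixed point of G_{m,n}. -/
open Real Matrix

/-!
Write `x = cos (π / m)`. Since `K ≠ k` we have `x ∉ k`, while `x ^ 2 ∈ k` and `cos (π / n) ∈ x • k`.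
Call a matrix even if its diagonal entries lie in `k` and its off-diagonal ones in `x • k`, and odd
if it is the other way round; as `x ^ 2 ∈ k`, the even and odd matrices of `SL(2, ℝ)` form a
subgroup, which contains `A` (even) and `B` (odd). An odd matrix has trace in `x • k`, so it is
never parabolic. For an even matrix fixing `α ∈ k`, the fixed-point equation splits into its
`k`- and `x • k`-components, and together with `det = 1` and `|tr| = 2` these force the matrix
to be `±1`.
-/

/-- A matrix in SL(2,ℝ) is parabolic if it is not ±I and has trace of absolute value 2. -/
def IsParabolicMat (M : Matrix (Fin 2) (Fin 2) ℝ) : Prop :=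
  M ≠ 1 ∧ M ≠ -1 ∧ |Matrix.trace M| = 2

/-- The Möbius action of `M` fixes the real number `z`. -/
def MoebiusFixes (M : Matrix (Fin 2) (Fin 2) ℝ) (z : ℝ) : Prop :=
  M 0 0 * z + M 0 1 = (M 1 0 * z + M 1 1) * z

section Graded

variable (k : Subfield ℝ) (x : ℝ)

noncomputable def gradedPart (p : ZMod 2) : AddSubgroup ℝ :=
  k.toSubring.toAddSubgroup.map (AddMonoidHom.mulLeft (x ^ p.val))

variable {k x}

lemma mem_gradedPart {p : ZMod 2} {r : ℝ} : r ∈ gradedPart k x p ↔ ∃ t ∈ k, x ^ p.val * t = r :=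
  AddSubgroup.mem_map

lemma mem_gradedPart_zero {r : ℝ} : r ∈ gradedPart k x 0 ↔ r ∈ k := by
  simp [mem_gradedPart]

lemma mem_gradedPart_one {r : ℝ} : r ∈ gradedPart k x 1 ↔ ∃ t ∈ k, x * t = r := by
  simp [mem_gradedPart, show (1 : ZMod 2).val = 1 from rfl]

lemma gradedPart_mul (hx : x ^ 2 ∈ k) {p q : ZMod 2} {a b : ℝ}
    (ha : a ∈ gradedPart k x p) (hb : b ∈ gradedPart k x q) : a * b ∈ gradedPart k x (p + q) := by
  obtain ⟨s, hs, rfl⟩ := mem_gradedPart.1 ha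
  obtain ⟨t, ht, rfl⟩ := mem_gradedPart.1 hb
  have hcarry : x ^ p.val * x ^ q.val = x ^ (p + q).val * (x ^ 2) ^ ((p.val + q.val) / 2) := by
    rw [← pow_add, ← pow_mul, ← pow_add, ZMod.val_add, Nat.mod_add_div]
  refine mem_gradedPart.2 ⟨(x ^ 2) ^ ((p.val + q.val) / 2) * (s * t),
    k.mul_mem (pow_mem hx _) (k.mul_mem hs ht), ?_⟩
  linear_combination s * t * hcarry.symm

variable (k x) in
def IsGradedMat (ε : ZMod 2) (M : Matrix (Fin 2) (Fin 2) ℝ) : Prop :=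
  ∀ i j : Fin 2, M i j ∈ gradedPart k x (ε + (i : ℕ) + (j : ℕ))

lemma isGradedMat_iff {ε : ZMod 2} {M : Matrix (Fin 2) (Fin 2) ℝ} :
    IsGradedMat k x ε M ↔ M 0 0 ∈ gradedPart k x ε ∧ M 0 1 ∈ gradedPart k x (ε + 1) ∧
      M 1 0 ∈ gradedPart k x (ε + 1) ∧ M 1 1 ∈ gradedPart k x ε := by
  simp [IsGradedMat, Fin.forall_fin_two, add_assoc, and_assoc, show (1 + 1 : ZMod 2) = 0 from rfl]

lemma IsGradedMat.mul (hx : x ^ 2 ∈ k) {ε δ : ZMod 2} {M N : Matrix (Fin 2) (Fin 2) ℝ}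
    (hM : IsGradedMat k x ε M) (hN : IsGradedMat k x δ N) : IsGradedMat k x (ε + δ) (M * N) := by
  intro i j
  have hparity : ∀ a b c d e : ZMod 2, a + b + e + (c + e + d) = a + c + b + d := by decide
  rw [Matrix.mul_apply]
  refine AddSubgroup.sum_mem _ fun l _ => ?_
  rw [← hparity]
  exact gradedPart_mul hx (hM i l) (hN l j)

lemma IsGradedMat.adjugate {ε : ZMod 2} {M : Matrix (Fin 2) (Fin 2) ℝ}
    (hM : IsGradedMat k x ε M) : IsGradedMat k x ε M.adjugate := by
  obtain ⟨h00, h01, h10, h11⟩ := isGradedMat_iff.1 hM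
  rw [Matrix.adjugate_fin_two]
  exact isGradedMat_iff.2 ⟨h11, neg_mem h01, neg_mem h10, h00⟩

lemma isGradedMat_one : IsGradedMat k x 0 1 :=
  isGradedMat_iff.2 ⟨mem_gradedPart_zero.2 k.one_mem, zero_mem _, zero_mem _,
    mem_gradedPart_zero.2 k.one_mem⟩

variable (k x) in
def gradedSubgroup (hx : x ^ 2 ∈ k) : Subgroup (SpecialLinearGroup (Fin 2) ℝ) where
  carrier := {M | ∃ ε, IsGradedMat k x ε M}
  one_mem' := ⟨0, isGradedMat_one⟩
  mul_mem' := fun ⟨ε, hM⟩ ⟨δ, hN⟩ => ⟨ε + δ, hM.mul hx hN⟩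
  inv_mem' := fun ⟨ε, hM⟩ => ⟨ε, hM.adjugate⟩

lemma eq_zero_of_mul_mem (hx : x ∉ k) {t : ℝ} (ht : t ∈ k) (hxt : x * t ∈ k) : t = 0 := by
  by_contra ht0
  exact hx (by simpa [ht0] using k.div_mem hxt ht)

lemma IsGradedMat.not_isParabolicMat_of_odd (hx : x ∉ k) {M : Matrix (Fin 2) (Fin 2) ℝ}
    (hM : IsGradedMat k x 1 M) : ¬ IsParabolicMat M := by
  rintro ⟨-, -, htr⟩
  obtain ⟨h00, -, -, h11⟩ := isGradedMat_iff.1 hM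
  obtain ⟨a, ha, hMa⟩ := mem_gradedPart_one.1 h00
  obtain ⟨d, hd, hMd⟩ := mem_gradedPart_one.1 h11
  have htrace : M.trace = x * (a + d) := by rw [Matrix.trace_fin_two, ← hMa, ← hMd]; ring
  have htr_mem : M.trace ∈ k := by
    rcases abs_eq (zero_le_two (α := ℝ)) |>.1 htr with h | h <;> rw [h]
    · exact ofNat_mem k 2
    · exact neg_mem (ofNat_mem k 2)
  have had : a + d = 0 := eq_zero_of_mul_mem hx (add_mem ha hd) (htrace ▸ htr_mem)
  simp [htrace, had] at htr

lemma IsGradedMat.not_isParabolicMat_of_even (hx : x ∉ k) {M : Matrix (Fin 2) (Fin 2) ℝ}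
    (hM : IsGradedMat k x 0 M) (hdet : M.det = 1) {α : ℝ} (hα : α ∈ k) (hα0 : α ≠ 0)
    (hfix : MoebiusFixes M α) : ¬ IsParabolicMat M := by
  rintro ⟨h1, hm1, htr⟩
  obtain ⟨h00, h01, h10, h11⟩ := isGradedMat_iff.1 hM
  rw [mem_gradedPart_zero] at h00 h11
  obtain ⟨b, hb, hMb⟩ := mem_gradedPart_one.1 h01
  obtain ⟨c, hc, hMc⟩ := mem_gradedPart_one.1 h10
  have hx0 : x ≠ 0 := fun h => hx (h ▸ zero_mem k)
  have hsplit : x * (b - c * α ^ 2) = (M 1 1 - M 0 0) * α := by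
    unfold MoebiusFixes at hfix; rw [← hMb, ← hMc] at hfix; linear_combination hfix
  have hbc : b - c * α ^ 2 = 0 :=
    eq_zero_of_mul_mem hx (sub_mem hb (mul_mem hc (pow_mem hα 2)))
      (hsplit ▸ mul_mem (sub_mem h11 h00) hα)
  have hdiag : M 1 1 = M 0 0 := by
    have := hsplit; rw [hbc, mul_zero, eq_comm, mul_eq_zero] at this
    exact sub_eq_zero.1 (this.resolve_right hα0)
  have hdiag_sq : M 0 0 ^ 2 = 1 := by
    rw [Matrix.trace_fin_two, hdiag, ← two_mul, abs_mul, abs_two] at htr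
    nlinarith [sq_abs (M 0 0)]
  have hc0 : c = 0 := by
    rw [Matrix.det_fin_two, hdiag, ← hMb, ← hMc] at hdet
    have h : x ^ 2 * (c ^ 2 * α ^ 2) = 0 := by
      linear_combination hdiag_sq - hdet - x ^ 2 * c * hbc
    simpa [hx0, hα0] using h
  have hb0 : b = 0 := by simpa [hc0] using hbc
  have hscalar : M = M 0 0 • 1 := by
    ext i j; fin_cases i <;> fin_cases j <;> simp [hdiag, ← hMb, ← hMc, hb0, hc0]
  rcases sq_eq_one_iff.1 hdiag_sq with h | h <;> rw [h] at hscalar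
  · exact h1 (by simpa using hscalar)
  · exact hm1 (by simpa using hscalar)

lemma isGradedMat_translation {y : ℝ} (hy : y ∈ gradedPart k x 1) :
    IsGradedMat k x 0 !![1, 2 * x + 2 * y; 0, 1] := by
  have hx : x ∈ gradedPart k x 1 := mem_gradedPart_one.2 ⟨1, k.one_mem, mul_one x⟩
  have h1 : (1 : ℝ) ∈ gradedPart k x 0 := mem_gradedPart_zero.2 k.one_mem
  refine isGradedMat_iff.2 ⟨by simpa using h1, ?_, by simp, by simpa using h1⟩
  simpa [two_mul] using add_mem (add_mem hx hx) (add_mem hy hy)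

lemma isGradedMat_rotation : IsGradedMat k x 1 !![2 * x, 1; -1, 0] := by
  have h1 : (1 : ℝ) ∈ gradedPart k x (1 + 1) := mem_gradedPart_zero.2 k.one_mem
  refine isGradedMat_iff.2 ⟨?_, by simpa using h1, by simpa using neg_mem h1, by simp⟩
  exact mem_gradedPart_one.2 ⟨2, ofNat_mem k 2, mul_comm x 2⟩

end Graded

section DoubleAngle

variable {x y : ℝ}

lemma closure_double_angle_le_closure :
    Subfield.closure {2 * x ^ 2 - 1, 2 * y ^ 2 - 1, x * y} ≤ Subfield.closure {x, y} := by
  have hx : x ∈ Subfield.closure {x, y} := Subfield.subset_closure (by simp)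
  have hy : y ∈ Subfield.closure {x, y} := Subfield.subset_closure (by simp)
  refine Subfield.closure_le.2 ?_
  rintro _ (rfl | rfl | rfl)
  · exact sub_mem (mul_mem (ofNat_mem _ 2) (pow_mem hx 2)) (one_mem _)
  · exact sub_mem (mul_mem (ofNat_mem _ 2) (pow_mem hy 2)) (one_mem _)
  · exact mul_mem hx hy

lemma sq_mem_closure_double_angle :
    x ^ 2 ∈ Subfield.closure {2 * x ^ 2 - 1, 2 * y ^ 2 - 1, x * y} := by
  have h : 2 * x ^ 2 - 1 ∈ Subfield.closure {2 * x ^ 2 - 1, 2 * y ^ 2 - 1, x * y} :=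
    Subfield.subset_closure (by simp)
  simpa using div_mem (add_mem h (one_mem _)) (ofNat_mem _ 2)

lemma mem_gradedPart_closure_double_angle (hx : x ≠ 0) :
    y ∈ gradedPart (Subfield.closure {2 * x ^ 2 - 1, 2 * y ^ 2 - 1, x * y}) x 1 := by
  have hxy : x * y ∈ Subfield.closure {2 * x ^ 2 - 1, 2 * y ^ 2 - 1, x * y} :=
    Subfield.subset_closure (by simp)
  refine mem_gradedPart_one.2 ⟨x * y / x ^ 2, div_mem hxy sq_mem_closure_double_angle, ?_⟩
  field_simp

lemma closure_le_closure_double_angle (hx : x ≠ 0)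
    (hxk : x ∈ Subfield.closure {2 * x ^ 2 - 1, 2 * y ^ 2 - 1, x * y}) :
    Subfield.closure {x, y} ≤ Subfield.closure {2 * x ^ 2 - 1, 2 * y ^ 2 - 1, x * y} := by
  have hxy : x * y ∈ Subfield.closure {2 * x ^ 2 - 1, 2 * y ^ 2 - 1, x * y} :=
    Subfield.subset_closure (by simp)
  refine Subfield.closure_le.2 ?_
  rintro _ (rfl | rfl)
  · exact hxk
  · simpa [hx] using div_mem hxy hxk

end DoubleAngle

lemma cos_pi_div_pos {m : ℕ} (hm : 3 ≤ m) : 0 < cos (π / m) := by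
  have hpos : 0 < π / m := div_pos pi_pos (by positivity)
  refine cos_pos_of_mem_Ioo ⟨by linarith [pi_pos], ?_⟩
  exact div_lt_div_of_pos_left pi_pos two_pos (by exact_mod_cast hm)

theorem stmt8_general (m n : ℕ) (hm : 3 ≤ m)
    (A B : Matrix.SpecialLinearGroup (Fin 2) ℝ)
    (hA : (A : Matrix (Fin 2) (Fin 2) ℝ) =
      !![1, 2 * Real.cos (Real.pi / (m : ℝ)) + 2 * Real.cos (Real.pi / (n : ℝ)); 0, 1])
    (hB : (B : Matrix (Fin 2) (Fin 2) ℝ) =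
      !![2 * Real.cos (Real.pi / (m : ℝ)), 1; -1, 0])
    (K k : Subfield ℝ)
    (hK : K = Subfield.closure ({Real.cos (Real.pi / (m : ℝ)),
      Real.cos (Real.pi / (n : ℝ))} : Set ℝ))
    (hk : k = Subfield.closure ({Real.cos (2 * Real.pi / (m : ℝ)),
      Real.cos (2 * Real.pi / (n : ℝ)),
      Real.cos (Real.pi / (m : ℝ)) * Real.cos (Real.pi / (n : ℝ))} : Set ℝ))
    (hne : K ≠ k) :
    ∀ α : ℝ, α ∈ k → α ≠ 0 →
      ¬ ∃ P ∈ Subgroup.closure ({A, B} : Set (Matrix.SpecialLinearGroup (Fin 2) ℝ)),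
        IsParabolicMat (P : Matrix (Fin 2) (Fin 2) ℝ) ∧
          MoebiusFixes (P : Matrix (Fin 2) (Fin 2) ℝ) α := by
  rintro α hα hα0 ⟨P, hP, hpar, hfix⟩
  rw [mul_div_assoc, mul_div_assoc, cos_two_mul, cos_two_mul] at hk
  subst hK hk
  set x := cos (π / m)
  set y := cos (π / n)
  have hx0 : x ≠ 0 := (cos_pi_div_pos hm).ne'
  have hxk := fun h => hne (le_antisymm (closure_le_closure_double_angle hx0 h)
    closure_double_angle_le_closure)
  have hG : Subgroup.closure {A, B} ≤
      gradedSubgroup _ x (sq_mem_closure_double_angle (y := y)) := by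
    refine (Subgroup.closure_le _).2 ?_
    rintro _ (rfl | rfl)
    · exact ⟨0, hA ▸ isGradedMat_translation (mem_gradedPart_closure_double_angle hx0)⟩
    · exact ⟨1, hB ▸ isGradedMat_rotation⟩
  obtain ⟨ε, hε⟩ := hG hP
  fin_cases ε
  · exact hε.not_isParabolicMat_of_even hxk P.2 hα hα0 hfix hpar
  · exact hε.not_isParabolicMat_of_odd hxk hpar

theorem stmt8 (m n : ℕ) (hm : 3 ≤ m) (hn : 3 ≤ n)
    (A B : Matrix.SpecialLinearGroup (Fin 2) ℝ)
    (hA : (A : Matrix (Fin 2) (Fin 2) ℝ) =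
      !![1, 2 * Real.cos (Real.pi / (m : ℝ)) + 2 * Real.cos (Real.pi / (n : ℝ)); 0, 1])
    (hB : (B : Matrix (Fin 2) (Fin 2) ℝ) =
      !![2 * Real.cos (Real.pi / (m : ℝ)), 1; -1, 0])
    (K k : Subfield ℝ)
    (hK : K = Subfield.closure ({Real.cos (Real.pi / (m : ℝ)),
      Real.cos (Real.pi / (n : ℝ))} : Set ℝ))
    (hk : k = Subfield.closure ({Real.cos (2 * Real.pi / (m : ℝ)),
      Real.cos (2 * Real.pi / (n : ℝ)),
      Real.cos (Real.pi / (m : ℝ)) * Real.cos (Real.pi / (n : ℝ))} : Set ℝ))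
    (hne : K ≠ k) :
    ∀ α : ℝ, α ∈ k → α ≠ 0 →
      ¬ ∃ P ∈ Subgroup.closure ({A, B} : Set (Matrix.SpecialLinearGroup (Fin 2) ℝ)),
        IsParabolicMat (P : Matrix (Fin 2) (Fin 2) ℝ) ∧
          MoebiusFixes (P : Matrix (Fin 2) (Fin 2) ℝ) α :=
  stmt8_general m n hm A B hA hB K k hK hk hne
end

section
/- Let λ = 2cos(π/7) and α = 7λ² + λ − 1. Then α ≠ 16 and ((α + 13)/(α − 16))² = α; in particular, the positive square root of α lies in the field ℚ(cos(π/7)). -/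
/-!
With `θ = π/7` we have `cos 4θ = -cos 3θ`; expanding both sides by the multiple-angle formulas and
dividing by `cos θ + 1` gives the minimal cubic `λ³ = λ² + 2λ - 1` of `λ = 2 cos θ`. Modulo this
cubic, `(α + 13)² - α (α - 16)²` reduces to `0`, so `(α + 13)/(α - 16)` squares to `α`. The bound
`cos θ ≥ 1 - θ²/2` gives `λ > 3/2`, hence `α > 16`; so this square root of `α` is positive, and it is
a rational expression in `cos θ`.
-/

open Real

theorem cos_pi_div_seven_cubic :
    8 * cos (π / 7) ^ 3 - 4 * cos (π / 7) ^ 2 - 4 * cos (π / 7) + 1 = 0 := by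
  set c := cos (π / 7)
  have h4 : cos (4 * (π / 7)) = -cos (3 * (π / 7)) := by
    rw [show 4 * (π / 7) = π - 3 * (π / 7) by ring, cos_pi_sub]
  rw [show 4 * (π / 7) = 2 * (2 * (π / 7)) by ring, cos_two_mul, cos_two_mul, cos_three_mul] at h4
  have hc : 0 < c := cos_pos_of_mem_Ioo ⟨by linarith [pi_pos], by linarith [pi_pos]⟩
  have hquartic : (c + 1) * (8 * c ^ 3 - 4 * c ^ 2 - 4 * c + 1) = 0 := by linear_combination h4
  exact (mul_eq_zero.mp hquartic).resolve_left (by positivity)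

theorem two_cos_pi_div_seven_cubic :
    (2 * cos (π / 7)) ^ 3 = (2 * cos (π / 7)) ^ 2 + 2 * (2 * cos (π / 7)) - 1 := by
  linear_combination cos_pi_div_seven_cubic

theorem three_halves_lt_two_cos_pi_div_seven : 3 / 2 < 2 * cos (π / 7) := by
  have hcos := one_sub_sq_div_two_le_cos (x := π / 7)
  nlinarith [pi_pos, pi_lt_four]

theorem sq_div_eq_of_cubic {K : Type*} [Field K] {x a : K} (hx : x ^ 3 = x ^ 2 + 2 * x - 1)
    (ha : a = 7 * x ^ 2 + x - 1) (ha16 : a ≠ 16) : ((a + 13) / (a - 16)) ^ 2 = a := by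
  have hsq : (a + 13) ^ 2 = a * (a - 16) ^ 2 := by
    subst ha
    linear_combination (-343 * x ^ 3 - 490 * x ^ 2 + 567 * x + 433) * hx
  rw [div_pow, div_eq_iff (pow_ne_zero 2 (sub_ne_zero.mpr ha16)), hsq]

theorem sqrt_eq_div_of_sq_div_eq {a : ℝ} (ha : 16 < a) (h : ((a + 13) / (a - 16)) ^ 2 = a) :
    √a = (a + 13) / (a - 16) := by
  calc √a = √(((a + 13) / (a - 16)) ^ 2) := by rw [h]
    _ = (a + 13) / (a - 16) := sqrt_sq (div_nonneg (by linarith) (by linarith))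

theorem stmt17 (lam α : ℝ) (hlam : lam = 2 * Real.cos (Real.pi / 7))
    (hα : α = 7 * lam ^ 2 + lam - 1) :
    α ≠ 16 ∧ ((α + 13) / (α - 16)) ^ 2 = α ∧
      Real.sqrt α ∈ Subfield.closure ({Real.cos (Real.pi / 7)} : Set ℝ) := by
  have hcubic : lam ^ 3 = lam ^ 2 + 2 * lam - 1 := hlam ▸ two_cos_pi_div_seven_cubic
  have hlam_gt : 3 / 2 < lam := hlam ▸ three_halves_lt_two_cos_pi_div_seven
  have hα16 : 16 < α := by nlinarith
  have hsq := sq_div_eq_of_cubic hcubic hα hα16.ne'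
  refine ⟨hα16.ne', hsq, ?_⟩
  set S := Subfield.closure ({cos (π / 7)} : Set ℝ)
  have hlamS : lam ∈ S := hlam ▸ mul_mem (ofNat_mem S 2) (Subfield.subset_closure rfl)
  have hαS : α ∈ S :=
    hα ▸ sub_mem (add_mem (mul_mem (ofNat_mem S 7) (pow_mem hlamS 2)) hlamS) (one_mem S)
  rw [sqrt_eq_div_of_sq_div_eq hα16 hsq]
  exact div_mem (add_mem hαS (ofNat_mem S 13)) (sub_mem hαS (ofNat_mem S 16))
end
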